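/- Let 𝒜 = Mₙ₁(ℂ) ⊕ Mₙ₂(ℂ) with norm ‖A₁ ⊕ A₂‖ = max(‖A₁‖, ‖A₂‖), and let x₁, x₂ be unit vectors in ℂ^{n₁}, ℂ^{n₂}. Then for a unimodular μ ∈ ℂ, the element x₁x₁* ⊕ μ x₂x₂* is Birkhoff–James orthogonal to the identity I ⊕ I if and only if μ = −1. -/

import Mathlib

open Matrix

/-- The operator (spectral) norm of a complex matrix, induced by the Euclidean norm on `ℂⁿ`. -/
noncomputable def opNorm {n : ℕ} (A : Matrix (Fin n) (Fin n) ℂ) : ℝ :=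
  ‖Matrix.toEuclideanCLM (𝕜 := ℂ) (n := Fin n) A‖

/-- Birkhoff–James orthogonality on the direct sum `Mₙ₁(ℂ) ⊕ Mₙ₂(ℂ)` with the max norm. -/
def BJ2 {n₁ n₂ : ℕ} (A B : Matrix (Fin n₁) (Fin n₁) ℂ × Matrix (Fin n₂) (Fin n₂) ℂ) : Prop :=
  ∀ c : ℂ, max (opNorm A.1) (opNorm A.2) ≤
    max (opNorm (A.1 + c • B.1)) (opNorm (A.2 + c • B.2))

/-!
Write `P = x xᴴ` for a unit vector `x`. On `span {x}` the matrix `a • P + c • 1` acts as `a + c`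
and on its orthogonal complement as `c`, so its norm lies between `‖a + c‖` and
`max ‖a + c‖ ‖c‖`; in particular both summands of `x₁x₁ᴴ ⊕ μ x₂x₂ᴴ` have norm `1`. For `μ = -1`
the numbers `1 + c` and `-1 + c` differ by `2`, so one of them has norm at least `1`. For any
other unimodular `μ`, the point `c = -(1 + μ) / 4` lies in the open unit discs centred at `0`,
`-1` and `-μ`, so adding `c • (I ⊕ I)` brings the norm below `1`.
-/

open InnerProductSpace

section RankOne

variable {E : Type*} [NormedAddCommGroup E] [InnerProductSpace ℂ E] {e : E}

lemma smul_rankOne_add_smul_one_apply (a c : ℂ) (v : E) :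
    (a • rankOne ℂ e e + c • 1 : E →L[ℂ] E) v = (a * inner ℂ e v) • e + c • v := by
  simp [mul_smul]

lemma norm_add_le_norm_smul_rankOne_add_smul_one (he : ‖e‖ = 1) (a c : ℂ) :
    ‖a + c‖ ≤ ‖a • rankOne ℂ e e + c • (1 : E →L[ℂ] E)‖ := by
  have h := (a • rankOne ℂ e e + c • (1 : E →L[ℂ] E)).le_opNorm e
  rw [smul_rankOne_add_smul_one_apply, inner_self_eq_norm_sq_to_K, he, ← add_smul, norm_smul,
    he] at h
  simpa using h

lemma norm_smul_rankOne_add_smul_one_le (he : ‖e‖ = 1) (a c : ℂ) :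
    ‖a • rankOne ℂ e e + c • (1 : E →L[ℂ] E)‖ ≤ max ‖a + c‖ ‖c‖ := by
  set M := max ‖a + c‖ ‖c‖
  have hM : 0 ≤ M := (norm_nonneg c).trans (le_max_right _ _)
  refine ContinuousLinearMap.opNorm_le_bound _ hM fun v => ?_
  set u := inner ℂ e v • e
  set w := v - u
  have huw : inner ℂ u w = 0 := by
    rw [inner_sub_right, inner_smul_left, inner_smul_right, inner_smul_left,
      inner_self_eq_norm_sq_to_K, he]
    simp only [map_one, one_pow, mul_one]
    ring
  have hTv : (a • rankOne ℂ e e + c • (1 : E →L[ℂ] E)) v = (a + c) • u + c • w := by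
    rw [smul_rankOne_add_smul_one_apply]
    simp only [u, w]
    module
  have pythagoras (x y : E) (h : inner ℂ x y = 0) : ‖x + y‖ ^ 2 = ‖x‖ ^ 2 + ‖y‖ ^ 2 := by
    rw [norm_add_sq (𝕜 := ℂ), h]
    simp
  have hv : ‖v‖ ^ 2 = ‖u‖ ^ 2 + ‖w‖ ^ 2 := by
    rw [← pythagoras _ _ huw, add_sub_cancel]
  have hTv_sq : ‖(a + c) • u + c • w‖ ^ 2 ≤ (M * ‖v‖) ^ 2 :=
    calc ‖(a + c) • u + c • w‖ ^ 2 = ‖a + c‖ ^ 2 * ‖u‖ ^ 2 + ‖c‖ ^ 2 * ‖w‖ ^ 2 := by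
          rw [pythagoras _ _ (by simp [huw]), norm_smul (a + c) u, norm_smul c w, mul_pow,
            mul_pow]
      _ ≤ M ^ 2 * ‖u‖ ^ 2 + M ^ 2 * ‖w‖ ^ 2 := by gcongr <;> simp [M]
      _ = (M * ‖v‖) ^ 2 := by rw [mul_pow, hv, mul_add]
  rw [hTv]
  exact le_of_sq_le_sq hTv_sq (by positivity)

end RankOne

section EuclideanSpace

variable {m : Type*} [Fintype m]

lemma toEuclideanCLM_vecMulVec [DecidableEq m] (x y : m → ℂ) :
    toEuclideanCLM (𝕜 := ℂ) (vecMulVec x (star y)) =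
      rankOne ℂ (WithLp.toLp 2 x) (WithLp.toLp 2 y) := by
  have h := symm_toEuclideanLin_rankOne (𝕜 := ℂ) (WithLp.toLp 2 x) (WithLp.toLp 2 y)
  rw [LinearEquiv.symm_apply_eq] at h
  ext1 v
  exact congrArg (· v) h.symm

lemma norm_toLp_eq_one {x : m → ℂ} (hx : star x ⬝ᵥ x = 1) : ‖WithLp.toLp 2 x‖ = 1 := by
  rw [norm_eq_sqrt_re_inner (𝕜 := ℂ), EuclideanSpace.inner_toLp_toLp, dotProduct_comm, hx]
  simp

end EuclideanSpace

lemma opNorm_smul_vecMulVec_add_smul_one {n : ℕ} (x : Fin n → ℂ) (a c : ℂ) :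
    opNorm (a • vecMulVec x (star x) + c • 1) =
      ‖a • rankOne ℂ (WithLp.toLp 2 x) (WithLp.toLp 2 x) + c • 1‖ := by
  rw [opNorm, map_add, map_smul, map_smul, map_one, toEuclideanCLM_vecMulVec]

lemma norm_add_le_opNorm_smul_vecMulVec_add_smul_one {n : ℕ} {x : Fin n → ℂ}
    (hx : star x ⬝ᵥ x = 1) (a c : ℂ) :
    ‖a + c‖ ≤ opNorm (a • vecMulVec x (star x) + c • 1) := by
  rw [opNorm_smul_vecMulVec_add_smul_one]
  exact norm_add_le_norm_smul_rankOne_add_smul_one (norm_toLp_eq_one hx) a c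

lemma opNorm_smul_vecMulVec_add_smul_one_le {n : ℕ} {x : Fin n → ℂ}
    (hx : star x ⬝ᵥ x = 1) (a c : ℂ) :
    opNorm (a • vecMulVec x (star x) + c • 1) ≤ max ‖a + c‖ ‖c‖ := by
  rw [opNorm_smul_vecMulVec_add_smul_one]
  exact norm_smul_rankOne_add_smul_one_le (norm_toLp_eq_one hx) a c

lemma Complex.exists_norm_lt_one_of_norm_eq_one_of_ne_neg_one {μ : ℂ} (hμ : ‖μ‖ = 1)
    (hne : μ ≠ -1) : ∃ c : ℂ, ‖c‖ < 1 ∧ ‖1 + c‖ < 1 ∧ ‖μ + c‖ < 1 := by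
  have hsq : μ.re ^ 2 + μ.im ^ 2 = 1 := by
    have h := Complex.sq_norm μ
    rw [hμ, one_pow, Complex.normSq_apply] at h
    linarith
  have hre : -1 < μ.re := by
    refine lt_of_le_of_ne (by nlinarith) fun h => hne (Complex.ext ?_ ?_)
    · simp [← h]
    · simp only [Complex.neg_im, Complex.one_im, neg_zero]
      nlinarith
  refine ⟨-(1 + μ) / 4, ?_, ?_, ?_⟩ <;>
    rw [← sq_lt_one_iff₀ (norm_nonneg _), Complex.sq_norm, Complex.normSq_apply] <;>
    simp <;> nlinarith

lemma Complex.one_le_max_norm_one_add_norm_neg_one_add (c : ℂ) :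
    1 ≤ max ‖1 + c‖ ‖-1 + c‖ := by
  have h : (2 : ℝ) ≤ ‖1 + c‖ + ‖-1 + c‖ := by
    simpa [show (1 + c) - (-1 + c) = 2 by ring] using norm_sub_le (1 + c) (-1 + c)
  by_contra! hlt
  linarith [max_lt_iff.1 hlt]

theorem stmt13 {n₁ n₂ : ℕ} (x₁ : Fin n₁ → ℂ) (x₂ : Fin n₂ → ℂ)
    (hx₁ : dotProduct (star x₁) x₁ = 1)
    (hx₂ : dotProduct (star x₂) x₂ = 1)
    (μ : ℂ) (hμ : ‖μ‖ = 1) :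
    BJ2 (Matrix.vecMulVec x₁ (star x₁), μ • Matrix.vecMulVec x₂ (star x₂))
      ((1 : Matrix (Fin n₁) (Fin n₁) ℂ), (1 : Matrix (Fin n₂) (Fin n₂) ℂ)) ↔ μ = -1 := by
  have hP₁ : opNorm (vecMulVec x₁ (star x₁)) = 1 := le_antisymm
    (by simpa using opNorm_smul_vecMulVec_add_smul_one_le hx₁ 1 0)
    (by simpa using norm_add_le_opNorm_smul_vecMulVec_add_smul_one hx₁ 1 0)
  unfold BJ2
  constructor
  · intro h
    by_contra hne
    obtain ⟨c, hc, hc₁, hcμ⟩ := Complex.exists_norm_lt_one_of_norm_eq_one_of_ne_neg_one hμ hne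
    have hup₁ : opNorm (vecMulVec x₁ (star x₁) + c • 1) ≤ max ‖1 + c‖ ‖c‖ := by
      simpa using opNorm_smul_vecMulVec_add_smul_one_le hx₁ 1 c
    have hup₂ := opNorm_smul_vecMulVec_add_smul_one_le hx₂ μ c
    have hle : 1 ≤ max (max ‖1 + c‖ ‖c‖) (max ‖μ + c‖ ‖c‖) :=
      hP₁ ▸ (le_max_left _ _).trans ((h c).trans (max_le_max hup₁ hup₂))
    exact hle.not_gt (max_lt (max_lt hc₁ hc) (max_lt hcμ hc))
  · rintro rfl c
    have hup₂ : opNorm ((-1 : ℂ) • vecMulVec x₂ (star x₂)) ≤ 1 := by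
      simpa using opNorm_smul_vecMulVec_add_smul_one_le hx₂ (-1) 0
    have hlow₁ : ‖1 + c‖ ≤ opNorm (vecMulVec x₁ (star x₁) + c • 1) := by
      simpa using norm_add_le_opNorm_smul_vecMulVec_add_smul_one hx₁ 1 c
    have hlow₂ := norm_add_le_opNorm_smul_vecMulVec_add_smul_one hx₂ (-1) c
    calc max (opNorm (vecMulVec x₁ (star x₁))) (opNorm ((-1 : ℂ) • vecMulVec x₂ (star x₂)))
        ≤ 1 := max_le hP₁.le hup₂
      _ ≤ max ‖1 + c‖ ‖-1 + c‖ := Complex.one_le_max_norm_one_add_norm_neg_one_add c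
      _ ≤ _ := max_le_max hlow₁ hlow₂
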